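/- The map s satisfies the symmetric-space identity s_x ∘ s_y ∘ s_x = s_{s_x(y)} for all x, y in S. -/

import Mathlib

noncomputable section

/-- `V n` : the symplectic vector space `ℝ^{2n}` presented as pairs of `n`-vectors. -/
abbrev V (n : ℕ) := (Fin n → ℝ) × (Fin n → ℝ)

/-- The standard symplectic bilinear form `ω⁰` on `ℝ^{2n}`. -/
def omega0 {n : ℕ} (x y : V n) : ℝ := ∑ i, (x.1 i * y.2 i - x.2 i * y.1 i)

/-- The space `S = ℝ × ℝ^{2n} × ℝ` with coordinates `(a, x, z)`. -/
abbrev S (n : ℕ) := ℝ × V n × ℝ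

/-- The geodesic symmetry `s_{(a,x,z)}(a',x',z')`. -/
def sym {n : ℕ} (p q : S n) : S n :=
  (2 * p.1 - q.1,
   (2 * Real.cosh (p.1 - q.1)) • p.2.1 - q.2.1,
   2 * Real.cosh (2 * (p.1 - q.1)) * p.2.2
     + omega0 p.2.1 q.2.1 * Real.sinh (p.1 - q.1) - q.2.2)

/-- The group law `L_{(a,x,z)}(a',x',z')` on `S`. -/
def Smul {n : ℕ} (p q : S n) : S n :=
  (p.1 + q.1,
   Real.exp (-q.1) • p.2.1 + q.2.1,
   Real.exp (-2 * q.1) * p.2.2 + q.2.2 + (1/2) * omega0 p.2.1 q.2.1 * Real.exp (-q.1))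

/-- The group inverse on `S`. -/
def Sinv {n : ℕ} (p : S n) : S n :=
  (-p.1, -(Real.exp p.1) • p.2.1, -(Real.exp (2 * p.1) * p.2.2))

/-! Every argument of `cosh` and `sinh` occurring on either side is `±X`, `X ± Y` or twice one of
these, where `X = 2a - b - c` and `Y = a - b` for `x = (a, u, z)`, `y = (b, v, t)`, `w = (c, p, r)`.
After expanding `ω⁰` by bilinearity and antisymmetry, each component of both sides is a combination
of `u, v, p`, resp. of `z, t, r, ω⁰(u,v), ω⁰(u,p), ω⁰(v,p)`, and the coefficients agree by
product-to-sum formulas for `cosh` and `sinh`. -/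

namespace Real

theorem cosh_add_add_cosh_sub (x y : ℝ) : cosh (x + y) + cosh (x - y) = 2 * cosh x * cosh y := by
  rw [cosh_add, cosh_sub]; ring

theorem sinh_add_add_sinh_sub (x y : ℝ) : sinh (x + y) + sinh (x - y) = 2 * sinh x * cosh y := by
  rw [sinh_add, sinh_sub]; ring

theorem cosh_mul_sinh_add_sub_cosh_sub_mul_sinh (x y : ℝ) :
    cosh x * sinh (x + y) - cosh (x - y) * sinh x = cosh (2 * x) * sinh y := by
  rw [sinh_add, cosh_sub, cosh_two_mul]; ring

end Real

open Real

section Omega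

variable {n : ℕ} (u v w : V n) (c : ℝ)

theorem omega0_sub_left : omega0 (u - v) w = omega0 u w - omega0 v w := by
  simp only [omega0, ← Finset.sum_sub_distrib]
  exact Finset.sum_congr rfl fun _ _ => by simp only [Prod.fst_sub, Prod.snd_sub, Pi.sub_apply]; ring

theorem omega0_sub_right : omega0 w (u - v) = omega0 w u - omega0 w v := by
  simp only [omega0, ← Finset.sum_sub_distrib]
  exact Finset.sum_congr rfl fun _ _ => by simp only [Prod.fst_sub, Prod.snd_sub, Pi.sub_apply]; ring

theorem omega0_smul_left : omega0 (c • u) w = c * omega0 u w := by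
  simp only [omega0, Finset.mul_sum]
  exact Finset.sum_congr rfl fun _ _ => by
    simp only [Prod.smul_fst, Prod.smul_snd, Pi.smul_apply, smul_eq_mul]; ring

theorem omega0_smul_right : omega0 w (c • u) = c * omega0 w u := by
  simp only [omega0, Finset.mul_sum]
  exact Finset.sum_congr rfl fun _ _ => by
    simp only [Prod.smul_fst, Prod.smul_snd, Pi.smul_apply, smul_eq_mul]; ring

theorem omega0_self : omega0 u u = 0 :=
  Finset.sum_eq_zero fun _ _ => by ring

theorem omega0_swap : omega0 u v = -omega0 v u := by
  simp only [omega0, ← Finset.sum_neg_distrib]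
  exact Finset.sum_congr rfl fun _ _ => by ring

end Omega

/-- the symmetric-space identity `s_x ∘ s_y ∘ s_x = s_{s_x(y)}`. -/
theorem sym_sym_sym (n : ℕ) (x y : S n) :
    ∀ w : S n, sym x (sym y (sym x w)) = sym (sym x y) w := by
  rintro ⟨c, p, r⟩
  obtain ⟨a, u, z⟩ := x
  obtain ⟨b, v, t⟩ := y
  simp only [sym]
  rw [show a - (2 * b - (2 * a - c)) = (2 * a - b - c) + (a - b) by ring,
    show a - c = (2 * a - b - c) - (a - b) by ring,
    show b - (2 * a - c) = -(2 * a - b - c) by ring]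
  refine Prod.ext (by ring) (Prod.ext ?_ ?_)
  all_goals generalize 2 * a - b - c = X, a - b = Y
  · simp only [cosh_neg]
    linear_combination (norm := module) (2 * cosh_add_add_cosh_sub X Y) • u
  · simp only [cosh_neg, sinh_neg, mul_neg, omega0_sub_left, omega0_sub_right, omega0_smul_left,
      omega0_smul_right, omega0_self, omega0_swap v u]
    rw [mul_add, mul_sub]
    linear_combination 2 * z * cosh_add_add_cosh_sub (2 * X) (2 * Y)
      + 2 * omega0 u v * cosh_mul_sinh_add_sub_cosh_sub_mul_sinh X Y
      + omega0 u p * sinh_add_add_sinh_sub X Y
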